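/- arXiv:0905.3293 — 3 statements merged into one kernel-verified Lean document; each statement's English description precedes it below -/
import Mathlib

section
/- Let t_1, …, t_n ∈ K^× and let t = diag(t_1, …, t_n) ∈ GL_n(K). Set x = (x_1, …, x_n) ∈ ℝ^n with x_i = −v(t_i). Then the tropical stabilizer {g ∈ SL_n(K) : g_trop · x = x} is exactly the conjugate subgroup t · SL_n(O_K) · t^{−1}. -/
open Classical

/-- The tropicalization `-v(a) = log |a|` of a field element, with `-v(0) = -∞`. -/
noncomputable def tropEntry {K : Type*} [Field K] (v : AbsoluteValue K ℝ) (a : K) : EReal :=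
  if a = 0 then ⊥ else ((Real.log (v a) : ℝ) : EReal)

/-- The tropicalized linear action of a matrix: `(g_trop · x)_i = max_j (-v(g_{ij}) + x_j)`. -/
noncomputable def tropAct {K : Type*} [Field K] {n : ℕ} (v : AbsoluteValue K ℝ)
    (g : Matrix (Fin n) (Fin n) K) (x : Fin n → EReal) : Fin n → EReal :=
  fun i => ⨆ j, tropEntry v (g i j) + x j

/-!
Conjugation by `diag(t)` acts on the tropical side as translation by the point
`x = (log |t_i|)_i`, so the stabilizer of `x` is the conjugate by `diag(t)` of the stabilizer of
the origin. A matrix fixes the origin exactly when every row has all entries in `O_K` and at least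
one entry of absolute value `1`. For an integral matrix the second condition is automatic once
`det s = 1`: expanding the determinant, every term contains a factor from row `i`, so the
ultrametric inequality gives `1 = |det s| ≤ max_j |s_ij|`.
-/

theorem EReal.coe_add_iSup {ι : Sort*} (a : ℝ) (f : ι → EReal) :
    (a : EReal) + ⨆ i, f i = ⨆ i, (a : EReal) + f i := by
  refine le_antisymm ?_ (iSup_le fun i => add_le_add_right (le_iSup f i) _)
  rw [add_comm, ← EReal.le_sub_iff_add_le (.inl (EReal.coe_ne_bot a)) (.inl (EReal.coe_ne_top a))]
  refine iSup_le fun i => ?_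
  rw [EReal.le_sub_iff_add_le (.inl (EReal.coe_ne_bot a)) (.inl (EReal.coe_ne_top a)), add_comm]
  exact le_iSup (fun i => (a : EReal) + f i) i

theorem EReal.coe_add_right_inj (a : ℝ) {y z : EReal} : (a : EReal) + y = a + z ↔ y = z := by
  refine ⟨fun h => ?_, fun h => h ▸ rfl⟩
  have hneg : ((-a : ℝ) : EReal) + a = 0 := by rw [← EReal.coe_add, neg_add_cancel, EReal.coe_zero]
  rw [← zero_add y, ← zero_add z, ← hneg, add_assoc, add_assoc, h]

theorem iSup_eq_iff_of_finite {ι α : Type*} [CompleteLinearOrder α] [Finite ι] [Nonempty ι]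
    {f : ι → α} {a : α} : ⨆ i, f i = a ↔ (∀ i, f i ≤ a) ∧ ∃ i, f i = a := by
  obtain ⟨i₀, hi₀⟩ := exists_eq_ciSup_of_finite (f := f)
  constructor
  · rintro rfl
    exact ⟨le_iSup f, i₀, hi₀⟩
  · rintro ⟨hle, i, rfl⟩
    exact le_antisymm (iSup_le hle) (le_iSup f i)

section Matrix

variable {K m : Type*} [Field K] [Fintype m] [DecidableEq m]

theorem diagonal_conj_apply {t : m → K} (ht : ∀ i, t i ≠ 0) (s : Matrix m m K) (i j : m) :
    (Matrix.diagonal t * s * (Matrix.diagonal t)⁻¹) i j = t i * s i j * (t j)⁻¹ := by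
  have hinv : (Matrix.diagonal t)⁻¹ = Matrix.diagonal (fun i => (t i)⁻¹) :=
    Matrix.inv_eq_right_inv <| by
      rw [Matrix.diagonal_mul_diagonal, ← Matrix.diagonal_one]
      exact congrArg _ (funext fun i => mul_inv_cancel₀ (ht i))
  rw [hinv, Matrix.mul_diagonal, Matrix.diagonal_mul]

variable {v : AbsoluteValue K ℝ}

theorem exists_abv_det_le_abv_apply (hna : IsNonarchimedean v) {s : Matrix m m K}
    (hs : ∀ i j, v (s i j) ≤ 1) (i : m) : ∃ j, v s.det ≤ v (s i j) := by
  obtain ⟨σ, -, hσ⟩ := IsNonarchimedean.finset_image_add v.map_zero v.nonneg hna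
    (fun σ : Equiv.Perm m => ((Equiv.Perm.sign σ : ℤ) : K) * ∏ j, s j (σ j)) Finset.univ
  refine ⟨σ i, ?_⟩
  rw [← Matrix.det_transpose, Matrix.det_apply']
  refine hσ.trans ?_
  simp only [map_mul, v.map_units_intCast, one_mul, map_prod]
  rw [← Finset.mul_prod_erase _ _ (Finset.mem_univ i)]
  exact mul_le_of_le_one_right (v.nonneg _)
    (Finset.prod_le_one (fun j _ => v.nonneg _) fun j _ => hs _ _)

theorem exists_abv_apply_eq_one_of_det_eq_one (hna : IsNonarchimedean v) {s : Matrix m m K}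
    (hs : ∀ i j, v (s i j) ≤ 1) (hdet : s.det = 1) (i : m) : ∃ j, v (s i j) = 1 := by
  obtain ⟨j, hj⟩ := exists_abv_det_le_abv_apply hna hs i
  rw [hdet, map_one] at hj
  exact ⟨j, le_antisymm (hs i j) hj⟩

end Matrix

section Tropical

variable {K : Type*} [Field K] (v : AbsoluteValue K ℝ)

theorem tropEntry_of_ne_zero {a : K} (ha : a ≠ 0) : tropEntry v a = (Real.log (v a) : EReal) :=
  if_neg ha

theorem tropEntry_mul (a b : K) : tropEntry v (a * b) = tropEntry v a + tropEntry v b := by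
  by_cases ha : a = 0
  · simp [tropEntry, ha]
  by_cases hb : b = 0
  · simp [tropEntry, hb]
  rw [tropEntry_of_ne_zero v ha, tropEntry_of_ne_zero v hb,
    tropEntry_of_ne_zero v (mul_ne_zero ha hb), map_mul,
    Real.log_mul (v.ne_zero ha) (v.ne_zero hb), EReal.coe_add]

theorem tropEntry_le_zero_iff (a : K) : tropEntry v a ≤ 0 ↔ v a ≤ 1 := by
  by_cases ha : a = 0
  · simp [tropEntry, ha]
  rw [tropEntry_of_ne_zero v ha, ← EReal.coe_zero, EReal.coe_le_coe_iff,
    Real.log_nonpos_iff (v.nonneg a)]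

theorem tropEntry_eq_zero_iff (a : K) : tropEntry v a = 0 ↔ v a = 1 := by
  by_cases ha : a = 0
  · simp [tropEntry, ha]
  have hpos := v.pos ha
  rw [tropEntry_of_ne_zero v ha, ← EReal.coe_zero, EReal.coe_eq_coe_iff, Real.log_eq_zero]
  constructor
  · rintro (h | h | h) <;> first | exact h | linarith
  · exact fun h => .inr (.inl h)

theorem tropEntry_inv_add_self {a : K} (ha : a ≠ 0) : tropEntry v a⁻¹ + tropEntry v a = 0 := by
  rw [← tropEntry_mul, inv_mul_cancel₀ ha, tropEntry_eq_zero_iff, map_one]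

variable {n : ℕ}

theorem tropAct_diagonal_conj {t : Fin n → K} (ht : ∀ i, t i ≠ 0) (s : Matrix (Fin n) (Fin n) K)
    (y : Fin n → EReal) :
    tropAct v (Matrix.diagonal t * s * (Matrix.diagonal t)⁻¹) (fun i => tropEntry v (t i) + y i) =
      fun i => tropEntry v (t i) + tropAct v s y i := by
  funext i
  have hterm : ∀ j, tropEntry v (t i * s i j * (t j)⁻¹) + (tropEntry v (t j) + y j) =
      tropEntry v (t i) + (tropEntry v (s i j) + y j) := fun j => by
    rw [tropEntry_mul, tropEntry_mul, add_assoc, ← add_assoc (tropEntry v _),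
      tropEntry_inv_add_self v (ht j), zero_add, add_assoc]
  simp only [tropAct, diagonal_conj_apply ht, hterm, tropEntry_of_ne_zero v (ht i),
    EReal.coe_add_iSup]

theorem tropAct_diagonal_conj_eq_iff {t : Fin n → K} (ht : ∀ i, t i ≠ 0)
    (s : Matrix (Fin n) (Fin n) K) (y : Fin n → EReal) :
    tropAct v (Matrix.diagonal t * s * (Matrix.diagonal t)⁻¹) (fun i => tropEntry v (t i) + y i) =
      (fun i => tropEntry v (t i) + y i) ↔ tropAct v s y = y := by
  rw [tropAct_diagonal_conj v ht]
  simp only [funext_iff, tropEntry_of_ne_zero v (ht _), EReal.coe_add_right_inj]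

theorem tropAct_zero_eq_zero_iff (s : Matrix (Fin n) (Fin n) K) :
    tropAct v s 0 = 0 ↔ ∀ i, (∀ j, v (s i j) ≤ 1) ∧ ∃ j, v (s i j) = 1 := by
  simp only [funext_iff, tropAct, Pi.zero_apply, add_zero]
  refine forall_congr' fun i => ?_
  have : Nonempty (Fin n) := ⟨i⟩
  simp only [iSup_eq_iff_of_finite, tropEntry_le_zero_iff, tropEntry_eq_zero_iff]

variable {v}

theorem tropAct_zero_eq_zero_iff_of_det_eq_one (hna : IsNonarchimedean v)
    {s : Matrix (Fin n) (Fin n) K} (hdet : s.det = 1) :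
    tropAct v s 0 = 0 ↔ ∀ i j, v (s i j) ≤ 1 := by
  rw [tropAct_zero_eq_zero_iff]
  exact ⟨fun h i => (h i).1,
    fun hs i => ⟨hs i, exists_abv_apply_eq_one_of_det_eq_one hna hs hdet i⟩⟩

end Tropical

theorem tropical_stabilizer_eq_conjugate_of_integral_points_general
    {K : Type*} [Field K] {n : ℕ} (v : AbsoluteValue K ℝ)
    (hna : IsNonarchimedean (⇑v))
    (t : Fin n → K) (ht : ∀ i, t i ≠ 0)
    (x : Fin n → ℝ) (hx : ∀ i, x i = Real.log (v (t i))) :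
    {g : Matrix (Fin n) (Fin n) K | g.det = 1 ∧
        tropAct v g (fun i => ((x i : ℝ) : EReal)) = fun i => ((x i : ℝ) : EReal)}
      = (fun s => Matrix.diagonal t * s * (Matrix.diagonal t)⁻¹) ''
        {s : Matrix (Fin n) (Fin n) K | s.det = 1 ∧ ∀ i j, v (s i j) ≤ 1} := by
  set D := Matrix.diagonal t
  have hD : IsUnit D := Matrix.isUnit_diagonal.2 (Pi.isUnit_iff.2 fun i => (ht i).isUnit)
  have hDD : D * D⁻¹ = 1 := Matrix.mul_nonsing_inv _ ((Matrix.isUnit_iff_isUnit_det D).1 hD)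
  have hxt : (fun i => ((x i : ℝ) : EReal)) =
      fun i => tropEntry v (t i) + (0 : Fin n → EReal) i := by
    simp only [hx, tropEntry_of_ne_zero v (ht _), Pi.zero_apply, add_zero]
  have hconj : ∀ s, D * s * D⁻¹ ∈ {g : Matrix (Fin n) (Fin n) K | g.det = 1 ∧
      tropAct v g (fun i => ((x i : ℝ) : EReal)) = fun i => ((x i : ℝ) : EReal)} ↔
      s.det = 1 ∧ ∀ i j, v (s i j) ≤ 1 := fun s => by
    rw [Set.mem_ofPred_eq, Matrix.det_conj hD, hxt, tropAct_diagonal_conj_eq_iff v ht]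
    exact and_congr_right (tropAct_zero_eq_zero_iff_of_det_eq_one hna)
  ext g
  have hg : D * (D⁻¹ * g * D) * D⁻¹ = g := by
    rw [← Matrix.mul_assoc, ← Matrix.mul_assoc, hDD, Matrix.one_mul, Matrix.mul_assoc, hDD,
      Matrix.mul_one]
  refine ⟨fun hmem => ⟨D⁻¹ * g * D, (hconj _).1 (by rwa [hg]), hg⟩, ?_⟩
  rintro ⟨s, hs, rfl⟩
  exact (hconj s).2 hs

/-- For a point `x` of the apartment whose coordinates `x_i = -v(t_i)` lie in the value group,
the tropical stabilizer of `x` in `SL_n(K)` is the conjugate `t · SL_n(O_K) · t⁻¹` of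
`SL_n(O_K)` by the diagonal matrix `t = diag(t_1, …, t_n)`. -/
theorem tropical_stabilizer_eq_conjugate_of_integral_points
    {K : Type*} [Field K] {n : ℕ} (v : AbsoluteValue K ℝ)
    (hna : IsNonarchimedean (⇑v))
    (hnontriv : ∃ a : K, a ≠ 0 ∧ v a ≠ 1)
    (t : Fin n → K) (ht : ∀ i, t i ≠ 0)
    (x : Fin n → ℝ) (hx : ∀ i, x i = Real.log (v (t i))) :
    {g : Matrix (Fin n) (Fin n) K | g.det = 1 ∧
        tropAct v g (fun i => ((x i : ℝ) : EReal)) = fun i => ((x i : ℝ) : EReal)}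
      = (fun s => Matrix.diagonal t * s * (Matrix.diagonal t)⁻¹) ''
        {s : Matrix (Fin n) (Fin n) K | s.det = 1 ∧ ∀ i j, v (s i j) ≤ 1} :=
  tropical_stabilizer_eq_conjugate_of_integral_points_general v hna t ht x hx
end

section
/- For every point x = (x_1, …, x_n) ∈ ℝ^n, the set {g ∈ SL_n(K) : g_trop · x = x} is a subgroup of SL_n(K), i.e., it contains the identity matrix and is closed under matrix multiplication and inversion. -/
/-!
Write `TropBounded v x g` for `g_trop · x ≤ x`, i.e. `v (g i j) ≤ exp (x i - x j)` for all `i, j`.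
By the ultrametric inequality these matrices are closed under products and adjugates. Conversely,
a bounded `g` with `(g_trop · x)_i < x_i` has `v (det g) < 1`, so for `det g = 1` being bounded
already means being fixed. The stabilizer is therefore `{g | det g = 1 ∧ TropBounded v x g}`,
which is closed under inverses because there `g⁻¹ = adj g`.
-/

open Classical

open Finset

section

variable {R ι : Type*} [CommRing R] {v : AbsoluteValue R ℝ} {x : ι → ℝ} {g h : Matrix ι ι R}

lemma AbsoluteValue.sum_le_of_isNonarchimedean (hna : IsNonarchimedean v) {β : Type*}
    {s : Finset β} {f : β → R} {C : ℝ} (hC : 0 ≤ C) (h : ∀ b ∈ s, v (f b) ≤ C) :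
    v (∑ b ∈ s, f b) ≤ C := by
  rcases s.eq_empty_or_nonempty with rfl | hs
  · simpa using hC
  · obtain ⟨b, hb, hle⟩ := hna.finset_image_add_of_nonempty f hs
    exact hle.trans (h b hb)

/-- The bound on the Leibniz term of `σ` telescopes to `∑ y - ∑ z` since `σ` permutes the
indices. -/
lemma Matrix.det_le_exp_sub_of_isNonarchimedean [Nontrivial R] [Fintype ι] [DecidableEq ι]
    (hna : IsNonarchimedean v) (M : Matrix ι ι R) (y z : ι → ℝ)
    (h : ∀ a b, v (M a b) ≤ Real.exp (y a - z b)) :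
    v M.det ≤ Real.exp (∑ a, y a - ∑ b, z b) := by
  rw [Matrix.det_apply]
  refine v.sum_le_of_isNonarchimedean hna (Real.exp_pos _).le fun σ _ => ?_
  calc v (Equiv.Perm.sign σ • ∏ k, M (σ k) k) = ∏ k, v (M (σ k) k) := by
        rw [v.map_units_int_smul, map_prod]
    _ ≤ ∏ k, Real.exp (y (σ k) - z k) :=
        prod_le_prod (fun _ _ => v.nonneg _) fun k _ => h (σ k) k
    _ = Real.exp (∑ a, y a - ∑ b, z b) := by
        rw [← Real.exp_sum, sum_sub_distrib, Equiv.sum_comp σ y]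

def TropBounded (v : AbsoluteValue R ℝ) (x : ι → ℝ) (g : Matrix ι ι R) : Prop :=
  ∀ i j, v (g i j) ≤ Real.exp (x i - x j)

lemma TropBounded.one [Nontrivial R] [DecidableEq ι] : TropBounded v x (1 : Matrix ι ι R) := by
  intro i j
  rcases eq_or_ne i j with rfl | hij
  · simp
  · simpa [Matrix.one_apply_ne hij] using (Real.exp_pos _).le

lemma TropBounded.mul [Fintype ι] (hna : IsNonarchimedean v) (hg : TropBounded v x g)
    (hh : TropBounded v x h) : TropBounded v x (g * h) := fun i k => by
  refine v.sum_le_of_isNonarchimedean hna (Real.exp_pos _).le fun j _ => ?_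
  calc v (g i j * h j k) ≤ Real.exp (x i - x j) * Real.exp (x j - x k) := by
        rw [map_mul]; exact mul_le_mul (hg i j) (hh j k) (v.nonneg _) (Real.exp_pos _).le
    _ = Real.exp (x i - x k) := by rw [← Real.exp_add]; ring_nf

/-- The `(i, j)` cofactor is the determinant of `g` with row `j` replaced by `e_i`; raising the
weight of row `j` from `x j` to `x i` makes the determinant bound apply to it. -/
lemma TropBounded.adjugate [Nontrivial R] [Fintype ι] [DecidableEq ι]
    (hna : IsNonarchimedean v) (hg : TropBounded v x g) :
    TropBounded v x g.adjugate := fun i j => by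
  have hrow : ∀ a b, v (g.updateRow j (Pi.single i 1) a b) ≤
      Real.exp (Function.update x j (x i) a - x b) := by
    intro a b
    rcases eq_or_ne a j with rfl | haj
    · rcases eq_or_ne b i with rfl | hbi
      · simp
      · simpa [Pi.single_apply, hbi] using (Real.exp_pos _).le
    · simpa [haj] using hg a b
  have hsum : ∑ a, Function.update x j (x i) a - ∑ b, x b = x i - x j := by
    rw [sum_update_of_mem (mem_univ j), ← add_sum_erase _ _ (mem_univ j)]
    simp only [sdiff_singleton_eq_erase]
    ring
  simpa [Matrix.adjugate_apply, hsum] using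
    Matrix.det_le_exp_sub_of_isNonarchimedean hna _ _ x hrow

/-- Expanding `det g` along row `i` against the adjugate, every term has absolute value
`< exp (x i - x j) * exp (x j - x i) = 1`. -/
lemma TropBounded.det_lt_one_of_row_lt [Nontrivial R] [Fintype ι] [DecidableEq ι]
    (hna : IsNonarchimedean v) (hg : TropBounded v x g) (i : ι)
    (hi : ∀ j, v (g i j) < Real.exp (x i - x j)) : v g.det < 1 := by
  rw [Matrix.det_eq_sum_mul_adjugate_row g i]
  obtain ⟨j, -, hj⟩ := hna.finset_image_add_of_nonempty (fun j => g i j * g.adjugate j i)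
    ⟨i, mem_univ i⟩
  refine hj.trans_lt ?_
  calc v (g i j * g.adjugate j i) < Real.exp (x i - x j) * Real.exp (x j - x i) := by
        rw [map_mul, mul_comm, mul_comm (Real.exp _)]
        exact mul_lt_mul' (hg.adjugate hna j i) (hi j) (v.nonneg _) (Real.exp_pos _)
    _ = 1 := by rw [← Real.exp_add]; simp

end

section

variable {K : Type*} [Field K] {v : AbsoluteValue K ℝ} {n : ℕ} {x : Fin n → ℝ}
  {g : Matrix (Fin n) (Fin n) K}

lemma tropEntry_add_le_iff (a : K) (s t : ℝ) :
    tropEntry v a + (s : EReal) ≤ t ↔ v a ≤ Real.exp (t - s) := by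
  by_cases ha : a = 0
  · simp [tropEntry, ha, (Real.exp_pos _).le]
  · rw [tropEntry, if_neg ha, ← EReal.coe_add, EReal.coe_le_coe_iff,
      ← Real.log_le_iff_le_exp (v.pos ha)]
    constructor <;> intro <;> linarith

lemma tropEntry_add_lt_iff (a : K) (s t : ℝ) :
    tropEntry v a + (s : EReal) < t ↔ v a < Real.exp (t - s) := by
  by_cases ha : a = 0
  · simp [tropEntry, ha, Real.exp_pos]
  · rw [tropEntry, if_neg ha, ← EReal.coe_add, EReal.coe_lt_coe_iff,
      ← Real.log_lt_iff_lt_exp (v.pos ha)]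
    constructor <;> intro <;> linarith

lemma tropAct_le_iff :
    tropAct v g (fun i => (x i : EReal)) ≤ (fun i => (x i : EReal)) ↔ TropBounded v x g := by
  simp only [Pi.le_def, tropAct, iSup_le_iff, tropEntry_add_le_iff, TropBounded]

lemma tropAct_eq_iff (hna : IsNonarchimedean v) (hdet : v g.det = 1) :
    tropAct v g (fun i => (x i : EReal)) = (fun i => (x i : EReal)) ↔ TropBounded v x g := by
  refine ⟨fun h => tropAct_le_iff.1 h.le, fun hg => le_antisymm (tropAct_le_iff.2 hg) ?_⟩
  intro i
  by_contra! hlt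
  have hrow : ∀ j, v (g i j) < Real.exp (x i - x j) := fun j =>
    (tropEntry_add_lt_iff _ _ _).1 ((le_iSup (fun j => tropEntry v (g i j) + x j) j).trans_lt hlt)
  exact (hg.det_lt_one_of_row_lt hna i hrow).ne hdet

end

theorem tropical_stabilizer_is_subgroup_general
    {K : Type*} [Field K] {n : ℕ} (v : AbsoluteValue K ℝ)
    (hna : IsNonarchimedean (⇑v))
    (x : Fin n → ℝ)
    (S : Set (Matrix (Fin n) (Fin n) K))
    (hS : S = {g : Matrix (Fin n) (Fin n) K | g.det = 1 ∧
        tropAct v g (fun i => ((x i : ℝ) : EReal)) = fun i => ((x i : ℝ) : EReal)}) :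
    (1 : Matrix (Fin n) (Fin n) K) ∈ S ∧
    (∀ g ∈ S, ∀ h ∈ S, g * h ∈ S) ∧
    (∀ g ∈ S, g⁻¹ ∈ S) := by
  have hmem : ∀ g, g ∈ S ↔ g.det = 1 ∧ TropBounded v x g := fun g => by
    subst hS
    exact and_congr_right fun hdet => tropAct_eq_iff hna (by rw [hdet, map_one])
  simp only [hmem]
  refine ⟨⟨Matrix.det_one, .one⟩, fun g ⟨hgdet, hg⟩ h ⟨hhdet, hh⟩ => ?_, fun g ⟨hgdet, hg⟩ => ?_⟩
  · exact ⟨by rw [Matrix.det_mul, hgdet, hhdet, one_mul], hg.mul hna hh⟩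
  · have hinv : g⁻¹ = g.adjugate := by rw [Matrix.inv_def, hgdet, Ring.inverse_one, one_smul]
    exact ⟨by rw [Matrix.det_nonsing_inv, hgdet, Ring.inverse_one], hinv ▸ hg.adjugate hna⟩

/-- For every point `x ∈ ℝ^n`, the tropical stabilizer
`{g ∈ SL_n(K) : g_trop · x = x}` is a subgroup of `SL_n(K)`: it contains the identity
matrix and is closed under matrix multiplication and inversion. -/
theorem tropical_stabilizer_is_subgroup
    {K : Type*} [Field K] {n : ℕ} (v : AbsoluteValue K ℝ)
    (hna : IsNonarchimedean (⇑v))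
    (hnontriv : ∃ a : K, a ≠ 0 ∧ v a ≠ 1)
    (x : Fin n → ℝ)
    (S : Set (Matrix (Fin n) (Fin n) K))
    (hS : S = {g : Matrix (Fin n) (Fin n) K | g.det = 1 ∧
        tropAct v g (fun i => ((x i : ℝ) : EReal)) = fun i => ((x i : ℝ) : EReal)}) :
    (1 : Matrix (Fin n) (Fin n) K) ∈ S ∧
    (∀ g ∈ S, ∀ h ∈ S, g * h ∈ S) ∧
    (∀ g ∈ S, g⁻¹ ∈ S) :=
  tropical_stabilizer_is_subgroup_general v hna x S hS
end

section
/- Let E ⊆ ℝ^n be a finite set, invariant under the coordinate-permutation action of the symmetric group S_n, such that all elements of E have the same coordinate sum, and let m ∈ E be a highest point of E. Let H = {x ∈ ℝ^n : x_1 + … + x_n = 0}. Then the collection of sets C(M) ∩ H, where M ranges over those elements of E for which C(M) has nonempty interior in ℝ^n, coincides with the collection of sets C(σ·m) ∩ H, where σ ranges over S_n. In other words, the maximal cells of the normal-fan complex of the polytope conv(E), restricted to H, are exactly the cones C_σ = {x ∈ H : ⟨σ·m, x⟩ ≥ ⟨N, x⟩ for all N ∈ E} for σ ∈ S_n. -/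
/-!
For weakly decreasing `y`, writing `m - N = ∑ cᵢ (eᵢ - eᵢ₊₁)` with `cᵢ ≥ 0` gives
`⟨m - N, y⟩ = ∑ cᵢ (yᵢ - yᵢ₊₁) ≥ 0`; by `S_n`-invariance of `E`, `σ·m` therefore maximizes
`⟨·, x⟩` over `E` whenever `x ∘ σ` is weakly decreasing. So `C(σ·m)` contains the nonempty open
set of `x` with `x ∘ σ` strictly decreasing. Conversely, if `x` is an interior point of `C(M)`,
sort `x` decreasingly by some `σ`: then `x ∈ C(σ·m)` as well, so the linear form `⟨M - σ·m, ·⟩`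
vanishes at `x` and is nonnegative near `x`, which forces `M = σ·m`.
-/

open scoped BigOperators

/-- `m` is a highest point of `E ⊆ ℝ^(n+1)`: for every `N ∈ E` the difference `m - N`
is a non-negative linear combination of the simple-root vectors `e_i - e_{i+1}`. -/
def IsHighestPoint {n : ℕ} (E : Finset (Fin (n + 1) → ℝ)) (m : Fin (n + 1) → ℝ) : Prop :=
  ∀ N ∈ E, ∃ c : Fin n → ℝ, (∀ i, 0 ≤ c i) ∧
    m - N = ∑ i, c i • (Pi.single i.castSucc (1 : ℝ) - Pi.single i.succ (1 : ℝ))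

/-- The coordinate-permutation action of the symmetric group on `ℝ^(n+1)`. -/
def permVec {n : ℕ} (σ : Equiv.Perm (Fin (n + 1))) (m : Fin (n + 1) → ℝ) :
    Fin (n + 1) → ℝ :=
  fun i => m (σ⁻¹ i)

open Filter Topology

section NormalCone

variable {ι : Type*} [Fintype ι]

def normalCone (E : Finset (ι → ℝ)) (M : ι → ℝ) : Set (ι → ℝ) :=
  {x | ∀ N ∈ E, N ⬝ᵥ x ≤ M ⬝ᵥ x}

lemma eq_zero_of_dotProduct_eq_zero_of_eventually_nonneg {v x : ι → ℝ} (hx : v ⬝ᵥ x = 0)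
    (hnonneg : ∀ᶠ z in 𝓝 x, 0 ≤ v ⬝ᵥ z) : v = 0 := by
  have hlim : Tendsto (fun t : ℝ => x - t • v) (𝓝[>] 0) (𝓝 x) := by
    refine tendsto_nhdsWithin_of_tendsto_nhds (Continuous.tendsto' ?_ 0 x (by simp))
    fun_prop
  obtain ⟨t, hz, ht⟩ := ((hlim.eventually hnonneg).and self_mem_nhdsWithin).exists
  rw [dotProduct_sub, dotProduct_smul, hx, smul_eq_mul] at hz
  have hvv : v ⬝ᵥ v ≤ 0 := by nlinarith
  exact dotProduct_self_eq_zero.1 (le_antisymm hvv (by simpa using dotProduct_self_star_nonneg v))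

lemma eq_of_mem_interior_normalCone {E : Finset (ι → ℝ)} {M M' x : ι → ℝ} (hM : M ∈ E)
    (hM' : M' ∈ E) (hx : x ∈ interior (normalCone E M)) (hx' : x ∈ normalCone E M') :
    M' = M := by
  refine (sub_eq_zero.1 (eq_zero_of_dotProduct_eq_zero_of_eventually_nonneg (x := x) ?_ ?_)).symm
  · rw [sub_dotProduct, sub_eq_zero]
    exact le_antisymm (hx' M hM) (interior_subset hx M' hM')
  · filter_upwards [mem_interior_iff_mem_nhds.1 hx] with z hz
    rw [sub_dotProduct, sub_nonneg]
    exact hz M' hM'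

end NormalCone

section HighestPoint

variable {n : ℕ}

lemma permVec_dotProduct (σ : Equiv.Perm (Fin (n + 1))) (N x : Fin (n + 1) → ℝ) :
    permVec σ N ⬝ᵥ x = N ⬝ᵥ x ∘ σ :=
  comp_equiv_symm_dotProduct N x σ

lemma IsHighestPoint.dotProduct_le {E : Finset (Fin (n + 1) → ℝ)} {m y : Fin (n + 1) → ℝ}
    (hhigh : IsHighestPoint E m) (hy : Antitone y) {N : Fin (n + 1) → ℝ} (hN : N ∈ E) :
    N ⬝ᵥ y ≤ m ⬝ᵥ y := by
  obtain ⟨c, hc, hmN⟩ := hhigh N hN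
  have hexpand : (m - N) ⬝ᵥ y = ∑ i, c i * (y i.castSucc - y i.succ) := by
    simp [hmN, sum_dotProduct, sub_dotProduct, single_dotProduct]
  have hnonneg : 0 ≤ (m - N) ⬝ᵥ y := hexpand ▸ Finset.sum_nonneg fun i _ =>
    mul_nonneg (hc i) (sub_nonneg.2 (hy (Fin.castSucc_le_succ i)))
  rwa [sub_dotProduct, sub_nonneg] at hnonneg

lemma IsHighestPoint.mem_normalCone_permVec {E : Finset (Fin (n + 1) → ℝ)} {m : Fin (n + 1) → ℝ}
    (hhigh : IsHighestPoint E m)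
    (hperm : ∀ (σ : Equiv.Perm (Fin (n + 1))), ∀ N ∈ E, permVec σ N ∈ E)
    {σ : Equiv.Perm (Fin (n + 1))} {x : Fin (n + 1) → ℝ} (hx : Antitone (x ∘ σ)) :
    x ∈ normalCone E (permVec σ m) := fun N hN => by
  have h := hhigh.dotProduct_le hx (hperm σ⁻¹ N hN)
  rw [permVec_dotProduct] at h ⊢
  simpa [Function.comp_assoc] using h

lemma isOpen_setOf_strictAnti_comp (σ : Equiv.Perm (Fin (n + 1))) :
    IsOpen {x : Fin (n + 1) → ℝ | StrictAnti (x ∘ σ)} := by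
  simp only [Fin.strictAnti_iff_succ_lt, Set.ofPred_forall, Function.comp_apply]
  exact isOpen_iInter_of_finite fun i => isOpen_lt (continuous_apply _) (continuous_apply _)

lemma IsHighestPoint.interior_normalCone_permVec_nonempty {E : Finset (Fin (n + 1) → ℝ)}
    {m : Fin (n + 1) → ℝ} (hhigh : IsHighestPoint E m)
    (hperm : ∀ (σ : Equiv.Perm (Fin (n + 1))), ∀ N ∈ E, permVec σ N ∈ E)
    (σ : Equiv.Perm (Fin (n + 1))) : (interior (normalCone E (permVec σ m))).Nonempty := by
  refine ⟨fun i => -((σ⁻¹ i : Fin (n + 1)) : ℝ), interior_maximal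
    (fun x hx => hhigh.mem_normalCone_permVec hperm hx.antitone)
    (isOpen_setOf_strictAnti_comp σ) ?_⟩
  intro i j hij
  simpa using hij

end HighestPoint

theorem maximal_cells_are_permuted_highest_weight_cones_general
    {n : ℕ} (E : Finset (Fin (n + 1) → ℝ))
    (hperm : ∀ (σ : Equiv.Perm (Fin (n + 1))), ∀ N ∈ E, permVec σ N ∈ E)
    (m : Fin (n + 1) → ℝ) (hm : m ∈ E) (hhigh : IsHighestPoint E m) :
    {S : Set (Fin (n + 1) → ℝ) | ∃ M ∈ E,
        (interior {x : Fin (n + 1) → ℝ |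
            ∀ N ∈ E, ∑ i, N i * x i ≤ ∑ i, M i * x i}).Nonempty ∧
        S = {x : Fin (n + 1) → ℝ |
            (∀ N ∈ E, ∑ i, N i * x i ≤ ∑ i, M i * x i) ∧ ∑ i, x i = 0}}
      = {S : Set (Fin (n + 1) → ℝ) | ∃ σ : Equiv.Perm (Fin (n + 1)),
          S = {x : Fin (n + 1) → ℝ |
            (∀ N ∈ E, ∑ i, N i * x i ≤ ∑ i, permVec σ m i * x i) ∧ ∑ i, x i = 0}} := by
  ext S
  constructor
  · rintro ⟨M, hM, ⟨x, hx⟩, rfl⟩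
    let σ := Tuple.sort (OrderDual.toDual ∘ x)
    have hsorted : Antitone (x ∘ σ) :=
      monotone_toDual_comp_iff.1 (Tuple.monotone_sort (OrderDual.toDual ∘ x))
    have hMσ : permVec σ m = M := eq_of_mem_interior_normalCone hM (hperm σ m hm) hx
      (hhigh.mem_normalCone_permVec hperm hsorted)
    exact ⟨σ, by rw [hMσ]⟩
  · rintro ⟨σ, rfl⟩
    exact ⟨permVec σ m, hperm σ m hm, hhigh.interior_normalCone_permVec_nonempty hperm σ, rfl⟩

/-- Let `E` be a finite `S_n`-invariant set whose elements all have the same coordinate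
sum, with highest point `m ∈ E`, and let `H` be the hyperplane of coordinate-sum zero.
Then the collection of sets `C(M) ∩ H` over those `M ∈ E` for which the cone
`C(M) = {x : ⟨M, x⟩ ≥ ⟨N, x⟩ for all N ∈ E}` has nonempty interior coincides with the
collection of the sets `C(σ·m) ∩ H` for `σ ∈ S_n`: the maximal cells of the normal-fan
complex restricted to `H` are exactly the cones attached to the `S_n`-orbit of `m`. -/
theorem maximal_cells_are_permuted_highest_weight_cones
    {n : ℕ} (E : Finset (Fin (n + 1) → ℝ))
    (hsum : ∃ s : ℝ, ∀ N ∈ E, ∑ i, N i = s)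
    (hperm : ∀ (σ : Equiv.Perm (Fin (n + 1))), ∀ N ∈ E, permVec σ N ∈ E)
    (m : Fin (n + 1) → ℝ) (hm : m ∈ E) (hhigh : IsHighestPoint E m) :
    {S : Set (Fin (n + 1) → ℝ) | ∃ M ∈ E,
        (interior {x : Fin (n + 1) → ℝ |
            ∀ N ∈ E, ∑ i, N i * x i ≤ ∑ i, M i * x i}).Nonempty ∧
        S = {x : Fin (n + 1) → ℝ |
            (∀ N ∈ E, ∑ i, N i * x i ≤ ∑ i, M i * x i) ∧ ∑ i, x i = 0}}
      = {S : Set (Fin (n + 1) → ℝ) | ∃ σ : Equiv.Perm (Fin (n + 1)),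
          S = {x : Fin (n + 1) → ℝ |
            (∀ N ∈ E, ∑ i, N i * x i ≤ ∑ i, permVec σ m i * x i) ∧ ∑ i, x i = 0}} :=
  maximal_cells_are_permuted_highest_weight_cones_general E hperm m hm hhigh
end
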